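/- arXiv:2105.05570 — 2 statements merged into one kernel-verified Lean document; each statement's English description precedes it below -/
import Mathlib

section
/- The second moment of cos θ against the p-adic Plancherel measure equals (1/4)(1 + 1/p): for every prime p, ∫₀^π (cos θ)² dμ_p(θ) = (1/4)(1 + 1/p). -/
/-!
With `t = 1/p` and `sin²θ cos²θ = sin²(2θ)/4`, the substitution `φ = 2θ` turns the integral into
`(1 + t)/(4π) · ∫₀^{2π} sin²φ / (1 - 2t cos φ + t²) dφ`. Polynomial division in `cos φ`,
`4t² sin²φ = (1 + t² + 2t cos φ)(1 - 2t cos φ + t²) - (1 - t²)²`, reduces the last integral to the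
Poisson kernel integral `∫₀^{2π} dφ / (1 - 2t cos φ + t²) = 2π / (1 - t²)`, and it equals `π`.
-/

open MeasureTheory Real intervalIntegral

lemma one_sub_mul_cos_pos {t : ℝ} (ht : |t| < 1) (φ : ℝ) : 0 < 1 - t * cos φ := by
  have := (abs_mul t (cos φ)).trans_le (mul_le_of_le_one_right (abs_nonneg t) (abs_cos_le_one φ))
  linarith [le_abs_self (t * cos φ)]

lemma one_sub_two_mul_mul_cos_add_sq_pos {t : ℝ} (ht : |t| < 1) (φ : ℝ) :
    0 < 1 - 2 * t * cos φ + t ^ 2 := by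
  have hsum : 1 - 2 * t * cos φ + t ^ 2 = (1 - t * cos φ) ^ 2 + (t * sin φ) ^ 2 := by
    rw [mul_pow, sin_sq]; ring
  rw [hsum]
  have := one_sub_mul_cos_pos ht φ
  positivity

/-- `φ + 2 arctan (t sin φ / (1 - t cos φ))` is a continuous argument of the Blaschke factor
`(e^{iφ} - t) / (1 - t e^{iφ})`, whose logarithmic derivative is the Poisson kernel. -/
lemma hasDerivAt_add_two_mul_arctan {t : ℝ} (ht : |t| < 1) (φ : ℝ) :
    HasDerivAt (fun φ ↦ φ + 2 * arctan (t * sin φ / (1 - t * cos φ)))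
      ((1 - t ^ 2) / (1 - 2 * t * cos φ + t ^ 2)) φ := by
  have hc := (one_sub_mul_cos_pos ht φ).ne'
  have hD := (one_sub_two_mul_mul_cos_add_sq_pos ht φ).ne'
  have hquot : HasDerivAt (fun φ ↦ t * sin φ / (1 - t * cos φ))
      ((t * cos φ * (1 - t * cos φ) - t * sin φ * (t * sin φ)) / (1 - t * cos φ) ^ 2) φ :=
    (((hasDerivAt_sin φ).const_mul t).div
      (((hasDerivAt_cos φ).const_mul t).const_sub 1) hc).congr_deriv (by ring)
  refine ((hasDerivAt_id φ).add (hquot.arctan.const_mul 2)).congr_deriv ?_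
  field_simp
  rw [sin_sq]
  ring

theorem integral_inv_one_sub_two_mul_mul_cos_add_sq {t : ℝ} (ht : |t| < 1) :
    ∫ φ in 0..2 * π, (1 - 2 * t * cos φ + t ^ 2)⁻¹ = 2 * π / (1 - t ^ 2) := by
  have ht2 : 1 - t ^ 2 ≠ 0 := (sub_pos.2 ((sq_lt_one_iff_abs_lt_one t).2 ht)).ne'
  have hint : ∫ φ in 0..2 * π, (1 - t ^ 2) / (1 - 2 * t * cos φ + t ^ 2) = 2 * π := by
    rw [integral_eq_sub_of_hasDerivAt (fun φ _ ↦ hasDerivAt_add_two_mul_arctan ht φ)]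
    · simp
    · refine Continuous.intervalIntegrable ?_ _ _
      exact continuous_const.div (by fun_prop) fun φ ↦ (one_sub_two_mul_mul_cos_add_sq_pos ht φ).ne'
  simp only [div_eq_mul_inv, intervalIntegral.integral_const_mul] at hint
  rw [eq_div_iff ht2, mul_comm, hint]

theorem integral_sin_sq_div_one_sub_two_mul_mul_cos_add_sq {t : ℝ} (ht : |t| < 1) :
    ∫ φ in 0..2 * π, sin φ ^ 2 / (1 - 2 * t * cos φ + t ^ 2) = π := by
  rcases eq_or_ne t 0 with rfl | ht0
  · simp [integral_sin_sq]
  have hD φ := (one_sub_two_mul_mul_cos_add_sq_pos ht φ).ne'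
  have hsplit : ∀ φ, sin φ ^ 2 / (1 - 2 * t * cos φ + t ^ 2) =
      ((1 + t ^ 2) + 2 * t * cos φ - (1 - t ^ 2) ^ 2 * (1 - 2 * t * cos φ + t ^ 2)⁻¹)
        / (4 * t ^ 2) := by
    intro φ
    have := hD φ
    field_simp
    rw [sin_sq]
    ring
  have hinv : IntervalIntegrable (fun φ ↦ (1 - t ^ 2) ^ 2 * (1 - 2 * t * cos φ + t ^ 2)⁻¹)
      volume 0 (2 * π) :=
    (continuous_const.mul
      ((by fun_prop : Continuous fun φ ↦ 1 - 2 * t * cos φ + t ^ 2).inv₀ hD)).intervalIntegrable _ _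
  simp_rw [hsplit]
  rw [intervalIntegral.integral_div, intervalIntegral.integral_sub _ hinv,
    intervalIntegral.integral_add, intervalIntegral.integral_const_mul,
    intervalIntegral.integral_const_mul, integral_cos,
    integral_inv_one_sub_two_mul_mul_cos_add_sq ht]
  · have ht2 : 1 - t ^ 2 ≠ 0 := (sub_pos.2 ((sq_lt_one_iff_abs_lt_one t).2 ht)).ne'
    simp only [intervalIntegral.integral_const, sin_two_pi, sin_zero, smul_eq_mul]
    field_simp
    ring
  all_goals exact Continuous.intervalIntegrable (by fun_prop) _ _

/-- The second moment of `cos θ` against the p-adic Plancherel measure equals `(1/4)(1+1/p)`. -/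
theorem plancherel_second_moment_cos (p : ℕ) (hp : p.Prime) :
    ∫ θ in (0:ℝ)..Real.pi,
        Real.cos θ ^ 2 *
          ((1 + 1 / (p : ℝ)) * (1 - 2 * Real.cos (2 * θ) / p + 1 / (p : ℝ) ^ 2)⁻¹ *
            ((2 / Real.pi) * Real.sin θ ^ 2)) = (1 / 4) * (1 + 1 / (p : ℝ)) := by
  set t : ℝ := 1 / p
  have ht : |t| < 1 := by
    have hp1 : (1 : ℝ) < p := by exact_mod_cast hp.one_lt
    rw [abs_of_pos (by positivity)]
    exact (div_lt_one (by positivity)).2 hp1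
  have hintegrand : ∀ θ, cos θ ^ 2 *
      ((1 + t) * (1 - 2 * cos (2 * θ) / p + 1 / (p : ℝ) ^ 2)⁻¹ * ((2 / π) * sin θ ^ 2)) =
      (1 + t) / (2 * π) * (sin (2 * θ) ^ 2 / (1 - 2 * t * cos (2 * θ) + t ^ 2)) := by
    intro θ
    rw [sin_two_mul]
    ring
  simp_rw [hintegrand]
  rw [intervalIntegral.integral_const_mul,
    intervalIntegral.integral_comp_mul_left (fun φ ↦ sin φ ^ 2 / (1 - 2 * t * cos φ + t ^ 2))
      two_ne_zero, mul_zero, integral_sin_sq_div_one_sub_two_mul_mul_cos_add_sq ht, smul_eq_mul]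
  field_simp
  ring
end

section
/- The difference bound for G_p: for z = u + iv with u > 0, |G_p(z) − G(z)| ≤ C p^{-1} G(u) for an absolute constant C and every prime p, where G_p and G are the exponential integrals against the p-adic Plancherel and Sato–Tate measures respectively. -/
/-!
The Plancherel density is the Sato–Tate density times the ratio
`(1 + 1/p) / (1 - 2 cos 2θ / p + 1/p²)`. Since `cos 2θ ≤ 1`, the denominator is at least
`(1 - 1/p)² ≥ 1/4`, so the ratio is `1 + O(1/p)` uniformly in `θ`. Bounding the difference of
the integrands pointwise, `|exp (2 z cos θ)| = exp (2 u cos θ)` turns the resulting integral into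
`G(u)`.
-/

open MeasureTheory Complex

/-- `G_p(z) = ∫₀^π exp(2z cos θ) dμ_p(θ)`, the integral against the p-adic Plancherel
measure. -/
noncomputable def Gp (p : ℕ) (z : ℂ) : ℂ :=
  ∫ θ in (0:ℝ)..Real.pi,
    Complex.exp (2 * z * (Real.cos θ : ℂ)) *
      (((1 + 1 / (p : ℝ)) * (1 - 2 * Real.cos (2 * θ) / p + 1 / (p : ℝ) ^ 2)⁻¹ *
        ((2 / Real.pi) * Real.sin θ ^ 2) : ℝ) : ℂ)

/-- `G(z) = ∫₀^π exp(2z cos θ) dμ_∞(θ)`, the integral against the Sato–Tate measure. -/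
noncomputable def G (z : ℂ) : ℂ :=
  ∫ θ in (0:ℝ)..Real.pi,
    Complex.exp (2 * z * (Real.cos θ : ℂ)) * (((2 / Real.pi) * Real.sin θ ^ 2 : ℝ) : ℂ)

/-- Real-valued `G(u) = ∫₀^π exp(2u cos θ) dμ_∞(θ)` for real `u`. -/
noncomputable def Greal (u : ℝ) : ℝ :=
  ∫ θ in (0:ℝ)..Real.pi, Real.exp (2 * u * Real.cos θ) * ((2 / Real.pi) * Real.sin θ ^ 2)

theorem norm_integral_mul_ofReal_sub_le {a b ε : ℝ} {f : ℝ → ℂ} {r w : ℝ → ℝ} (hab : a ≤ b)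
    (hf : Continuous f) (hr : Continuous r) (hw : Continuous w) (hw₀ : ∀ θ, 0 ≤ w θ)
    (hr₁ : ∀ θ, |r θ - 1| ≤ ε) :
    ‖(∫ θ in a..b, f θ * ((r θ * w θ : ℝ) : ℂ)) - ∫ θ in a..b, f θ * (w θ : ℂ)‖ ≤
      ε * ∫ θ in a..b, ‖f θ‖ * w θ := by
  rw [← intervalIntegral.integral_sub ((by fun_prop : Continuous _).intervalIntegrable _ _)
    ((by fun_prop : Continuous _).intervalIntegrable _ _), ← intervalIntegral.integral_const_mul]
  refine intervalIntegral.norm_integral_le_of_norm_le hab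
    (Filter.Eventually.of_forall fun θ _ => ?_) ((by fun_prop : Continuous _).intervalIntegrable _ _)
  have hdiff : f θ * ((r θ * w θ : ℝ) : ℂ) - f θ * (w θ : ℂ) = f θ * (((r θ - 1) * w θ : ℝ) : ℂ) := by
    push_cast; ring
  rw [hdiff, norm_mul, Complex.norm_real, Real.norm_eq_abs, abs_mul, abs_of_nonneg (hw₀ θ)]
  calc ‖f θ‖ * (|r θ - 1| * w θ) ≤ ‖f θ‖ * (ε * w θ) :=
        mul_le_mul_of_nonneg_left (mul_le_mul_of_nonneg_right (hr₁ θ) (hw₀ θ)) (norm_nonneg _)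
    _ = ε * (‖f θ‖ * w θ) := by ring

noncomputable def plancherelRatio (p θ : ℝ) : ℝ :=
  (1 + 1 / p) * (1 - 2 * Real.cos (2 * θ) / p + 1 / p ^ 2)⁻¹

theorem quarter_le_plancherelRatio_denom {p : ℝ} (hp : 2 ≤ p) (θ : ℝ) :
    1 / 4 ≤ 1 - 2 * Real.cos (2 * θ) / p + 1 / p ^ 2 := by
  have hq : 1 / p ≤ 1 / 2 := one_div_le_one_div_of_le two_pos hp
  have hq₀ : 0 < 1 / p := by positivity
  calc (1 : ℝ) / 4 ≤ (1 - 1 / p) ^ 2 := by nlinarith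
    _ = 1 - 2 * 1 / p + 1 / p ^ 2 := by ring
    _ ≤ 1 - 2 * Real.cos (2 * θ) / p + 1 / p ^ 2 := by
        gcongr
        exact Real.cos_le_one _

theorem continuous_plancherelRatio {p : ℝ} (hp : 2 ≤ p) : Continuous (plancherelRatio p) := by
  unfold plancherelRatio
  refine continuous_const.mul (Continuous.inv₀ (by fun_prop) fun θ => ?_)
  exact (lt_of_lt_of_le (by norm_num) (quarter_le_plancherelRatio_denom hp θ)).ne'

theorem abs_plancherelRatio_sub_one_le {p : ℝ} (hp : 2 ≤ p) (θ : ℝ) :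
    |plancherelRatio p θ - 1| ≤ 12 / p := by
  have hp₀ : 0 < p := by linarith
  have hq : 1 / p ≤ 1 / 2 := one_div_le_one_div_of_le two_pos hp
  have hnum : |1 + 2 * Real.cos (2 * θ) - 1 / p| ≤ 3 := by
    rw [abs_le]
    constructor <;> nlinarith [Real.neg_one_le_cos (2 * θ), Real.cos_le_one (2 * θ),
      one_div_pos.2 hp₀]
  have hD₄ := quarter_le_plancherelRatio_denom hp θ
  have hD₀ : 0 < 1 - 2 * Real.cos (2 * θ) / p + 1 / p ^ 2 := by linarith
  have hratio : plancherelRatio p θ - 1 =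
      (1 + 2 * Real.cos (2 * θ) - 1 / p) / p / (1 - 2 * Real.cos (2 * θ) / p + 1 / p ^ 2) := by
    rw [plancherelRatio, eq_div_iff hD₀.ne', sub_mul, mul_assoc, inv_mul_cancel₀ hD₀.ne']
    field_simp
    ring
  rw [hratio, abs_div, abs_div, abs_of_pos hD₀, abs_of_pos hp₀, div_le_iff₀ hD₀]
  calc |1 + 2 * Real.cos (2 * θ) - 1 / p| / p ≤ 3 / p := by gcongr
    _ = 12 / p * (1 / 4) := by ring
    _ ≤ 12 / p * (1 - 2 * Real.cos (2 * θ) / p + 1 / p ^ 2) := by gcongr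

theorem norm_cexp_two_mul_mul_cos (u v θ : ℝ) :
    ‖Complex.exp (2 * (u + v * Complex.I) * (Real.cos θ : ℂ))‖ = Real.exp (2 * u * Real.cos θ) := by
  rw [Complex.norm_exp]
  congr 1
  simp [Complex.cos_ofReal_re]

/-- Difference bound: for `z = u + iv` with `u > 0`,
`|G_p(z) − G(z)| ≤ C p⁻¹ G(u)` for an absolute constant `C` and every prime `p`. -/
theorem Gp_sub_G_bound : ∃ C : ℝ, 0 < C ∧ ∀ (p : ℕ), p.Prime → ∀ u v : ℝ, 0 < u →
    ‖Gp p (u + v * Complex.I) - G (u + v * Complex.I)‖ ≤ C * (p : ℝ)⁻¹ * Greal u := by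
  refine ⟨12, by norm_num, fun p hp u v _ => ?_⟩
  have hp₂ : (2 : ℝ) ≤ p := by exact_mod_cast hp.two_le
  calc ‖Gp p (u + v * Complex.I) - G (u + v * Complex.I)‖
      ≤ 12 / p * ∫ θ in (0:ℝ)..Real.pi,
          ‖Complex.exp (2 * (u + v * Complex.I) * (Real.cos θ : ℂ))‖ *
            ((2 / Real.pi) * Real.sin θ ^ 2) :=
        norm_integral_mul_ofReal_sub_le (r := plancherelRatio p) Real.pi_pos.le (by fun_prop)
          (continuous_plancherelRatio hp₂) (by fun_prop) (fun θ => by positivity)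
          (abs_plancherelRatio_sub_one_le hp₂)
    _ = 12 * (p : ℝ)⁻¹ * Greal u := by
        simp_rw [norm_cexp_two_mul_mul_cos, Greal, div_eq_mul_inv]
end
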